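/- arXiv:1910.04947 — 2 statements merged into one kernel-verified Lean document; each statement's English description precedes it below -/
import Mathlib

section
/- For divisors c of n with c a proper divisor (c < n, c | n), Σ_{k | n} μ(n/k)·gcd(k,c)² = 0. -/
/-!
Write `h(gcd(k, c)) = ∑_{e ∣ k, e ∣ c} F(e)` with `F = μ * h` (Möbius inversion applied to `h` at
`gcd(k, c)`). Inverting once more in `k`, the sum `∑_{k ∣ n} μ(n/k) h(gcd(k, c))` recovers the summand
`F(n)` truncated to `n ∣ c`, which vanishes when `n ∤ c`. For `h(m) = m²`, `F` is Jordan's totient `J₂`.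
-/

open Finset ArithmeticFunction
open scoped ArithmeticFunction.Moebius

lemma Nat.divisors_filter_dvd_eq_divisors_gcd {k : ℕ} (hk : k ≠ 0) (c : ℕ) :
    {e ∈ k.divisors | e ∣ c} = (k.gcd c).divisors := by
  rw [← Nat.divisors_filter_dvd_of_dvd hk (Nat.gcd_dvd_left k c)]
  refine filter_congr fun e he => ?_
  rw [Nat.dvd_gcd_iff, and_iff_right (Nat.dvd_of_mem_divisors he)]

namespace ArithmeticFunction

variable {R : Type*} [Ring R]

lemma sum_divisors_sum_moebius_mul (h : ℕ → R) {m : ℕ} (hm : 0 < m) :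
    ∑ e ∈ m.divisors, ∑ d ∈ e.divisors, (μ (e / d) : R) * h d = h m := by
  refine (sum_eq_iff_sum_mul_moebius_eq (f := fun e => ∑ d ∈ e.divisors, (μ (e / d) : R) * h d)).2
    (fun e _ => ?_) m hm
  exact Nat.sum_divisorsAntidiagonal' (fun a b => (μ a : R) * h b)

lemma sum_divisors_moebius_mul_apply_gcd_eq_zero (h : ℕ → R) {n c : ℕ} (hnc : ¬n ∣ c) :
    ∑ k ∈ n.divisors, (μ (n / k) : R) * h (k.gcd c) = 0 := by
  rcases Nat.eq_zero_or_pos n with rfl | hn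
  · simp
  let f : ℕ → R := fun e => if e ∣ c then ∑ d ∈ e.divisors, (μ (e / d) : R) * h d else 0
  have sum_f : ∀ k > 0, ∑ e ∈ k.divisors, f e = h (k.gcd c) := fun k hk => by
    rw [← sum_filter, Nat.divisors_filter_dvd_eq_divisors_gcd hk.ne',
      sum_divisors_sum_moebius_mul h (Nat.gcd_pos_of_pos_left c hk)]
  have inversion := (sum_eq_iff_sum_mul_moebius_eq.1 sum_f) n hn
  rw [Nat.sum_divisorsAntidiagonal' (fun a b => (μ a : R) * h (b.gcd c))] at inversion
  simpa [f, hnc] using inversion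

end ArithmeticFunction

theorem sum_moebius_gcd_sq_eq_zero_general (n c : ℕ) (hc : c ∣ n) (hcn : c < n) :
    (∑ k ∈ n.divisors, ArithmeticFunction.moebius (n / k) * (Nat.gcd k c : ℤ) ^ 2) = 0 := by
  simpa using sum_divisors_moebius_mul_apply_gcd_eq_zero (fun m => (m : ℤ) ^ 2)
    fun hnc => hcn.ne (Nat.dvd_antisymm hc hnc)

/-- For every proper divisor `c` of `n` (`c | n`, `c < n`),
`Σ_{k | n} μ(n/k)·gcd(k,c)² = 0`. -/
theorem sum_moebius_gcd_sq_eq_zero (n c : ℕ) (hn : 0 < n) (hc : c ∣ n) (hcn : c < n) :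
    (∑ k ∈ n.divisors, ArithmeticFunction.moebius (n / k) * (Nat.gcd k c : ℤ) ^ 2) = 0 :=
  sum_moebius_gcd_sq_eq_zero_general n c hc hcn
end

section
/- The multiplicative identity: Σ_{c | n} (1/gcd(c,n/c)) · Σ_{k | n, gcd(k,c)=gcd(c,n/c)} μ(n/k)·gcd(k,c)²·σ_ℤ(k/gcd(k,c)²)·μ(gcd(c,n/c)) = φ(n), where σ_ℤ(x) = σ(x) if x is a positive integer and 0 otherwise. Equivalently: Σ_{c | n} (μ(gcd(c,n/c))/gcd(c,n/c)) · Σ_{k | n} μ(n/k)·gcd(k,c)²·σ_ℤ(k/gcd(k,c)²) = φ(n). -/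
/-- The sum-of-divisors function extended to positive rationals:
`σ_ℤ(x) = σ(x)` if `x` is a positive integer, and `0` otherwise. -/
noncomputable def sigmaZ (x : ℚ) : ℚ :=
  if x.den = 1 ∧ 0 < x.num then (∑ d ∈ (x.num.toNat).divisors, (d : ℚ)) else 0

open ArithmeticFunction
open scoped ArithmeticFunction.Moebius ArithmeticFunction.sigma

/-!
For `c ∣ n` put `g = gcd(c, n/c)` and `F_c(k) = gcd(k,c)² σ_ℤ(k/gcd(k,c)²)` (`gcdSqSigma c`), so
that the inner sum is the Dirichlet convolution `(μ * F_c)(n)`. The function `k ↦ F_c(k)` is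
multiplicative, and on divisors of `a` it only depends on `gcd(c, a)`; hence the summand
`μ(g)/g · (μ * F_c)(n)` (`divisorTerm c n`) factors along every coprime splitting `n = ab`,
`c = c₁c₂` with `c₁ ∣ a`, `c₂ ∣ b`, and so does `μ(c) · n/c`. It therefore suffices to compare
the two at `c = p^γ`, `n = p^e`: there `(μ * F_c)(p^e) = F_c(p^e) - F_c(p^(e-1))` is `p^e` if
`2γ ≤ e`, `-1` if `γ = e = 1` and `0` otherwise, which matches `μ(p^γ) p^(e-γ)` in each case.
Finally `∑_{c ∣ n} μ(c) n/c = φ(n)` is Möbius inversion of `∑_{d ∣ n} φ(d) = n`.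
-/

section PairMultiplicative

variable {R : Type*}

def IsPairMultiplicative [MulOneClass R] (f : ℕ → ℕ → R) : Prop :=
  f 1 1 = 1 ∧ ∀ {a b c d : ℕ}, a.Coprime b → c ∣ a → d ∣ b → f (c * d) (a * b) = f c a * f d b

namespace IsPairMultiplicative

theorem mul [CommMonoid R] {f g : ℕ → ℕ → R} (hf : IsPairMultiplicative f)
    (hg : IsPairMultiplicative g) : IsPairMultiplicative (fun c n => f c n * g c n) :=
  ⟨by dsimp only; rw [hf.1, hg.1, one_mul], fun hab hc hd => by
    dsimp only; rw [hf.2 hab hc hd, hg.2 hab hc hd, mul_mul_mul_comm]⟩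

theorem inv [DivisionCommMonoid R] {f : ℕ → ℕ → R} (hf : IsPairMultiplicative f) :
    IsPairMultiplicative (fun c n => (f c n)⁻¹) :=
  ⟨by dsimp only; rw [hf.1, inv_one], fun hab hc hd => by
    dsimp only; rw [hf.2 hab hc hd, mul_inv]⟩

theorem natCast [Semiring R] {f : ℕ → ℕ → ℕ} (hf : IsPairMultiplicative f) :
    IsPairMultiplicative (fun c n => (f c n : R)) :=
  ⟨by dsimp only; rw [hf.1, Nat.cast_one], fun hab hc hd => by
    dsimp only; rw [hf.2 hab hc hd, Nat.cast_mul]⟩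

theorem eq_of_prime_pow [MulOneClass R] {f g : ℕ → ℕ → R} (hf : IsPairMultiplicative f)
    (hg : IsPairMultiplicative g)
    (h : ∀ p γ e, p.Prime → 0 < e → γ ≤ e → f (p ^ γ) (p ^ e) = g (p ^ γ) (p ^ e))
    {c n : ℕ} (hn : n ≠ 0) (hc : c ∣ n) : f c n = g c n := by
  induction n using Nat.recOnPosPrimePosCoprime generalizing c with
  | prime_pow p e hp he =>
    obtain ⟨γ, hγ, rfl⟩ := (Nat.dvd_prime_pow hp).mp hc
    exact h p γ e hp he hγ
  | zero => exact absurd rfl hn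
  | one => rw [Nat.dvd_one.mp hc, hf.1, hg.1]
  | coprime a b ha hb hab iha ihb =>
    obtain ⟨c₁, c₂, h₁, h₂, rfl⟩ := exists_dvd_and_dvd_of_dvd_mul hc
    rw [hf.2 hab h₁ h₂, hg.2 hab h₁ h₂, iha (by omega) h₁, ihb (by omega) h₂]

end IsPairMultiplicative

theorem ArithmeticFunction.IsMultiplicative.isPairMultiplicative_left [MonoidWithZero R]
    {f : ArithmeticFunction R} (hf : f.IsMultiplicative) : IsPairMultiplicative (fun c _ => f c) :=
  ⟨hf.map_one, fun hab hc hd => hf.map_mul_of_coprime (Nat.Coprime.of_dvd hc hd hab)⟩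

theorem ArithmeticFunction.IsMultiplicative.isPairMultiplicative_comp [MonoidWithZero R]
    {f : ArithmeticFunction R} (hf : f.IsMultiplicative) {h : ℕ → ℕ → ℕ}
    (hh : IsPairMultiplicative h) (hdvd : ∀ c n, c ∣ n → h c n ∣ n) :
    IsPairMultiplicative (fun c n => f (h c n)) :=
  ⟨by dsimp only; rw [hh.1, hf.map_one], fun hab hc hd => by
    dsimp only
    rw [hh.2 hab hc hd,
      hf.map_mul_of_coprime (Nat.Coprime.of_dvd (hdvd _ _ hc) (hdvd _ _ hd) hab)]⟩

theorem isPairMultiplicative_div : IsPairMultiplicative (fun c n => n / c) :=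
  ⟨Nat.div_one 1, fun _ hc hd => (Nat.div_mul_div_comm hc hd).symm⟩

theorem isPairMultiplicative_gcd_div : IsPairMultiplicative (fun c n => Nat.gcd c (n / c)) := by
  refine ⟨Nat.gcd_one_left _, fun {a b c d} hab hc hd => ?_⟩
  have had : (a / c).Coprime (b / d) :=
    Nat.Coprime.of_dvd (Nat.div_dvd_of_dvd hc) (Nat.div_dvd_of_dvd hd) hab
  dsimp only
  rw [← Nat.div_mul_div_comm hc hd, had.gcd_mul,
    (Nat.Coprime.of_dvd hd (Nat.div_dvd_of_dvd hc) hab.symm).gcd_mul_right_cancel,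
    (Nat.Coprime.of_dvd hc (Nat.div_dvd_of_dvd hd) hab).gcd_mul_left_cancel]

end PairMultiplicative

theorem Nat.gcd_pow_pow (p a b : ℕ) : Nat.gcd (p ^ a) (p ^ b) = p ^ min a b := by
  rcases le_total a b with h | h
  · rw [Nat.gcd_eq_left (pow_dvd_pow p h), min_eq_left h]
  · rw [Nat.gcd_eq_right (pow_dvd_pow p h), min_eq_right h]

theorem sigma_one_apply_prime_pow_succ {p : ℕ} (hp : p.Prime) (j : ℕ) :
    σ 1 (p ^ (j + 1)) = σ 1 (p ^ j) + p ^ (j + 1) := by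
  rw [sigma_one_apply_prime_pow hp, sigma_one_apply_prime_pow hp, Finset.sum_range_succ]

theorem sum_moebius_mul_div_eq_totient {R : Type*} [Ring R] {n : ℕ} (hn : 0 < n) :
    ∑ c ∈ n.divisors, (μ c : R) * ((n / c : ℕ) : R) = Nat.totient n := by
  rw [← Nat.sum_divisorsAntidiagonal (fun a b => (μ a : R) * (b : R))]
  refine (sum_eq_iff_sum_mul_moebius_eq (f := fun d => (Nat.totient d : R)) (g := (↑))).mp
    (fun m _ => ?_) n hn
  exact_mod_cast congrArg (Nat.cast (R := R)) (Nat.sum_totient m)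

theorem moebius_mul_apply_prime_pow_succ {R : Type*} [Ring R] (f : ArithmeticFunction R) {p : ℕ}
    (hp : p.Prime) (e : ℕ) :
    ((μ : ArithmeticFunction R) * f) (p ^ (e + 1)) = f (p ^ (e + 1)) - f (p ^ e) := by
  rw [mul_apply, Nat.sum_divisorsAntidiagonal (fun a b => (μ : ArithmeticFunction R) a * f b),
    Nat.sum_divisors_prime_pow hp, Finset.sum_range_succ', Finset.sum_range_succ']
  have hsq : ∀ i, (μ : ArithmeticFunction R) (p ^ (i + 1 + 1)) = 0 := fun i => by
    rw [intCoe_apply, moebius_apply_prime_pow hp (by omega), if_neg (by omega), Int.cast_zero]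
  rw [Finset.sum_eq_zero fun i _ => by rw [hsq, zero_mul], zero_add, pow_zero, Nat.div_one,
    pow_one, pow_succ p e, Nat.mul_div_cancel _ hp.pos, intCoe_apply, intCoe_apply,
    moebius_apply_prime hp, moebius_apply_one]
  push_cast
  rw [neg_one_mul, one_mul, neg_add_eq_sub]

theorem sigmaZ_natCast (m : ℕ) : sigmaZ m = σ 1 m := by
  rcases Nat.eq_zero_or_pos m with rfl | hm
  · simp [sigmaZ]
  · rw [sigmaZ, if_pos ⟨Rat.den_natCast m, by simpa using hm⟩]
    simp [sigma_one_apply]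

theorem sigmaZ_natCast_div (k d : ℕ) :
    sigmaZ ((k : ℚ) / d) = if d ∣ k then (σ 1 (k / d) : ℚ) else 0 := by
  rcases eq_or_ne d 0 with rfl | hd
  · simp [sigmaZ]
  split_ifs with h
  · rw [← Nat.cast_div h (by exact_mod_cast hd), sigmaZ_natCast]
  · rw [sigmaZ, if_neg fun h' => h ((Rat.den_div_natCast_eq_one_iff k d hd).mp h'.1)]

noncomputable def gcdSqSigma (c : ℕ) : ArithmeticFunction ℚ :=
  ⟨fun k => (Nat.gcd k c : ℚ) ^ 2 * sigmaZ (k / (Nat.gcd k c : ℚ) ^ 2), by simp [sigmaZ]⟩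

theorem gcdSqSigma_apply (c k : ℕ) :
    gcdSqSigma c k = if Nat.gcd k c ^ 2 ∣ k
      then ((Nat.gcd k c ^ 2 * σ 1 (k / Nat.gcd k c ^ 2) : ℕ) : ℚ) else 0 := by
  rw [gcdSqSigma, coe_mk, ← Nat.cast_pow, sigmaZ_natCast_div]
  split_ifs <;> push_cast <;> ring

theorem isMultiplicative_gcdSqSigma (c : ℕ) : (gcdSqSigma c).IsMultiplicative := by
  refine ⟨by simp [gcdSqSigma_apply], fun {m n} hmn => ?_⟩
  have hgcd : Nat.gcd (m * n) c = Nat.gcd m c * Nat.gcd n c := by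
    rw [Nat.gcd_comm, hmn.gcd_mul, Nat.gcd_comm c, Nat.gcd_comm c]
  have hgm : (Nat.gcd m c ^ 2).Coprime n :=
    (Nat.Coprime.of_dvd (Nat.gcd_dvd_left m c) dvd_rfl hmn).pow_left 2
  have hgn : (Nat.gcd n c ^ 2).Coprime m :=
    (Nat.Coprime.of_dvd (Nat.gcd_dvd_left n c) dvd_rfl hmn.symm).pow_left 2
  have hdvd : (Nat.gcd m c * Nat.gcd n c) ^ 2 ∣ m * n ↔
      Nat.gcd m c ^ 2 ∣ m ∧ Nat.gcd n c ^ 2 ∣ n := by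
    rw [mul_pow]
    exact ⟨fun h => ⟨hgm.dvd_mul_right.mp (dvd_of_mul_right_dvd h),
      hgn.dvd_mul_left.mp (dvd_of_mul_left_dvd h)⟩, fun h => mul_dvd_mul h.1 h.2⟩
  simp only [gcdSqSigma_apply, hgcd, hdvd]
  by_cases hm : Nat.gcd m c ^ 2 ∣ m <;> by_cases hn : Nat.gcd n c ^ 2 ∣ n <;>
    simp only [hm, hn, and_self, and_false, false_and, if_true, if_false, mul_zero, zero_mul]
  have hquot : Nat.Coprime (m / Nat.gcd m c ^ 2) (n / Nat.gcd n c ^ 2) :=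
    Nat.Coprime.of_dvd (Nat.div_dvd_of_dvd hm) (Nat.div_dvd_of_dvd hn) hmn
  rw [mul_pow, ← Nat.div_mul_div_comm hm hn, isMultiplicative_sigma.map_mul_of_coprime hquot]
  push_cast
  ring

theorem moebius_mul_gcdSqSigma_apply (c n : ℕ) :
    ((μ : ArithmeticFunction ℚ) * gcdSqSigma c) n = ∑ k ∈ n.divisors,
      (μ (n / k) : ℚ) * (Nat.gcd k c : ℚ) ^ 2 * sigmaZ ((k : ℚ) / (Nat.gcd k c : ℚ) ^ 2) := by
  rw [mul_apply,
    Nat.sum_divisorsAntidiagonal' (fun a b => (μ : ArithmeticFunction ℚ) a * gcdSqSigma c b)]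
  simp only [intCoe_apply, gcdSqSigma, coe_mk, mul_assoc]

theorem moebius_mul_gcdSqSigma_gcd (c n : ℕ) :
    ((μ : ArithmeticFunction ℚ) * gcdSqSigma (Nat.gcd c n)) n =
      ((μ : ArithmeticFunction ℚ) * gcdSqSigma c) n := by
  simp only [moebius_mul_gcdSqSigma_apply]
  refine Finset.sum_congr rfl fun k hk => ?_
  rw [← Nat.gcd_assoc, Nat.gcd_eq_left ((Nat.gcd_dvd_left k c).trans (Nat.dvd_of_mem_divisors hk))]

theorem isPairMultiplicative_moebius_mul_gcdSqSigma :
    IsPairMultiplicative (fun c n => ((μ : ArithmeticFunction ℚ) * gcdSqSigma c) n) := by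
  refine ⟨(isMultiplicative_moebius.intCast.mul (isMultiplicative_gcdSqSigma 1)).map_one,
    fun {a b c d} hab hc hd => ?_⟩
  dsimp only
  rw [(isMultiplicative_moebius.intCast.mul
      (isMultiplicative_gcdSqSigma _)).map_mul_of_coprime hab,
    ← moebius_mul_gcdSqSigma_gcd _ a, ← moebius_mul_gcdSqSigma_gcd _ b,
    (Nat.Coprime.of_dvd hd dvd_rfl hab.symm).gcd_mul_right_cancel, Nat.gcd_eq_left hc,
    (Nat.Coprime.of_dvd hc dvd_rfl hab).gcd_mul_left_cancel, Nat.gcd_eq_left hd]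

theorem gcdSqSigma_prime_pow {p : ℕ} (hp : p.Prime) (γ i : ℕ) :
    gcdSqSigma (p ^ γ) (p ^ i) = if 2 * γ ≤ i
      then ((p ^ (2 * γ) * σ 1 (p ^ (i - 2 * γ)) : ℕ) : ℚ) else if i = 0 then 1 else 0 := by
  rw [gcdSqSigma_apply, Nat.gcd_pow_pow, ← pow_mul]
  simp only [Nat.pow_dvd_pow_iff_le_right hp.one_lt]
  rcases le_total γ i with h | h
  · rw [min_eq_right h, mul_comm γ]
    split_ifs with h₁ <;> first | omega | rfl | rw [Nat.pow_div h₁ hp.pos]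
  · rw [min_eq_left h]
    rcases Nat.eq_zero_or_pos i with rfl | hi
    · rcases Nat.eq_zero_or_pos γ with rfl | hγ
      · simp [isMultiplicative_sigma.map_one]
      · simp [hγ.ne']
    · rw [if_neg (by omega), if_neg (by omega), if_neg hi.ne']

theorem moebius_mul_gcdSqSigma_prime_pow_succ {p : ℕ} (hp : p.Prime) (γ e : ℕ) :
    ((μ : ArithmeticFunction ℚ) * gcdSqSigma (p ^ γ)) (p ^ (e + 1)) =
      if 2 * γ ≤ e + 1 then (p : ℚ) ^ (e + 1) else if e = 0 then -1 else 0 := by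
  rw [moebius_mul_apply_prime_pow_succ _ hp, gcdSqSigma_prime_pow hp, gcdSqSigma_prime_pow hp,
    if_neg (Nat.succ_ne_zero e)]
  rcases lt_trichotomy (2 * γ) (e + 1) with h | h | h
  · rw [if_pos h.le, if_pos h.le, if_pos (by omega),
      show e + 1 - 2 * γ = e - 2 * γ + 1 by omega, sigma_one_apply_prime_pow_succ hp]
    push_cast
    rw [mul_add, add_sub_cancel_left, ← pow_add, show 2 * γ + (e - 2 * γ + 1) = e + 1 by omega]
  · rw [if_pos h.le, if_pos h.le, if_neg (by omega), if_neg (by omega), h, Nat.sub_self]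
    simp [isMultiplicative_sigma.map_one]
  · simp only [if_neg (show ¬2 * γ ≤ e + 1 by omega), if_neg (show ¬2 * γ ≤ e by omega)]
    split_ifs <;> simp

noncomputable def divisorTerm (c n : ℕ) : ℚ :=
  (μ (Nat.gcd c (n / c)) : ℚ) / (Nat.gcd c (n / c) : ℚ) *
    ((μ : ArithmeticFunction ℚ) * gcdSqSigma c) n

theorem isPairMultiplicative_divisorTerm : IsPairMultiplicative divisorTerm := by
  have hμ := (isMultiplicative_moebius.intCast (R := ℚ)).isPairMultiplicative_comp
    isPairMultiplicative_gcd_div fun c n hc =>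
      (Nat.gcd_dvd_right _ _).trans (Nat.div_dvd_of_dvd hc)
  -- `divisorTerm` unfolds to this product, `a / b` being `a * b⁻¹` in `ℚ`
  exact (hμ.mul (isPairMultiplicative_gcd_div.natCast (R := ℚ)).inv).mul
    isPairMultiplicative_moebius_mul_gcdSqSigma

theorem divisorTerm_prime_pow {p : ℕ} (hp : p.Prime) {γ e : ℕ} (he : 0 < e) (hγ : γ ≤ e) :
    divisorTerm (p ^ γ) (p ^ e) = (μ (p ^ γ) : ℚ) * ((p ^ e / p ^ γ : ℕ) : ℚ) := by
  obtain ⟨e, rfl⟩ : ∃ e', e = e' + 1 := ⟨e - 1, by omega⟩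
  rw [divisorTerm, moebius_mul_gcdSqSigma_prime_pow_succ hp, Nat.pow_div hγ hp.pos,
    Nat.gcd_pow_pow]
  rcases le_or_gt (2 * γ) (e + 1) with h | h
  · have hsplit : (p : ℚ) ^ (e + 1) = p ^ γ * p ^ (e + 1 - γ) := by
      rw [← pow_add, Nat.add_sub_cancel' hγ]
    have hp0 : (p : ℚ) ≠ 0 := by exact_mod_cast hp.ne_zero
    rw [if_pos h, min_eq_left (by omega), hsplit]
    push_cast
    field_simp
  · rw [if_neg (by omega), min_eq_right (by omega)]
    split_ifs with he0
    · obtain ⟨rfl, rfl⟩ : e = 0 ∧ γ = 1 := ⟨he0, by omega⟩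
      simp [moebius_apply_prime hp]
    · have hμ : μ (p ^ γ) = 0 := by
        rw [moebius_apply_prime_pow hp (by omega), if_neg (by omega)]
      simp [hμ]

theorem divisorTerm_eq {c n : ℕ} (hn : n ≠ 0) (hc : c ∣ n) :
    divisorTerm c n = (μ c : ℚ) * ((n / c : ℕ) : ℚ) :=
  isPairMultiplicative_divisorTerm.eq_of_prime_pow
    (isMultiplicative_moebius.intCast.isPairMultiplicative_left.mul
      isPairMultiplicative_div.natCast)
    (fun _ _ _ hp he hγ => divisorTerm_prime_pow hp he hγ) hn hc

/-- `Σ_{c | n} (μ(gcd(c,n/c))/gcd(c,n/c)) · Σ_{k | n} μ(n/k)·gcd(k,c)²·σ_ℤ(k/gcd(k,c)²) = φ(n)`. -/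
theorem sum_mult_identity (n : ℕ) (hn : 0 < n) :
    (∑ c ∈ n.divisors,
        ((ArithmeticFunction.moebius (Nat.gcd c (n / c)) : ℚ) / (Nat.gcd c (n / c) : ℚ)) *
          ∑ k ∈ n.divisors,
            (ArithmeticFunction.moebius (n / k) : ℚ) * (Nat.gcd k c : ℚ) ^ 2 *
              sigmaZ ((k : ℚ) / (Nat.gcd k c : ℚ) ^ 2)) = (Nat.totient n : ℚ) := by
  calc _ = ∑ c ∈ n.divisors, (μ c : ℚ) * ((n / c : ℕ) : ℚ) :=
        Finset.sum_congr rfl fun c hc => by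
          rw [← divisorTerm_eq hn.ne' (Nat.dvd_of_mem_divisors hc), divisorTerm,
            moebius_mul_gcdSqSigma_apply]
    _ = Nat.totient n := sum_moebius_mul_div_eq_totient hn
end
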